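/- Let G be a group and let B be a G-graded category over a commutative ring k. Then the smash product category B#G is a free G-category, where u ∈ G acts on objects by u·(x,s) = (x, us) and acts identically on morphism components (Hom_{B#G}((x,s),(y,t)) = Hom_B^{t⁻¹s}(x,y) = Hom_{B#G}((x,us),(y,ut))), and the quotient category (B#G)/G is isomorphic to B. -/

import Mathlib

/-! Basic notion of a (small) category over a commutative ring `k`:
objects form a type, morphism sets are `k`-modules and composition is `k`-bilinear. -/

structure kCat (k : Type) [CommRing k] where
  Obj : Type
  Hom : Obj → Obj → Type
  [homAdd : ∀ x y, AddCommGroup (Hom x y)]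
  [homMod : ∀ x y, Module k (Hom x y)]
  id : ∀ x, Hom x x
  comp : ∀ {x y z}, Hom y z → Hom x y → Hom x z
  id_comp : ∀ {x y} (f : Hom x y), comp (id y) f = f
  comp_id : ∀ {x y} (f : Hom x y), comp f (id x) = f
  assoc : ∀ {w x y z} (h : Hom y z) (g : Hom x y) (f : Hom w x),
    comp (comp h g) f = comp h (comp g f)
  comp_add_left : ∀ {x y z} (g g' : Hom y z) (f : Hom x y),
    comp (g + g') f = comp g f + comp g' f
  comp_add_right : ∀ {x y z} (g : Hom y z) (f f' : Hom x y),
    comp g (f + f') = comp g f + comp g f'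
  comp_smul_left : ∀ {x y z} (a : k) (g : Hom y z) (f : Hom x y),
    comp (a • g) f = a • comp g f
  comp_smul_right : ∀ {x y z} (a : k) (g : Hom y z) (f : Hom x y),
    comp g (a • f) = a • comp g f

attribute [instance] kCat.homAdd kCat.homMod

/-- Transport of a morphism along equalities of its source and target. -/
def kCat.trans2 {k : Type} [CommRing k] (C : kCat k) {x x' y y' : C.Obj}
    (hx : x = x') (hy : y = y') (f : C.Hom x y) : C.Hom x' y' :=
  cast (by rw [hx, hy]) f

/-- A `k`-linear functor between categories over `k`. -/
structure kFunctor (k : Type) [CommRing k] (C D : kCat k) where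
  obj : C.Obj → D.Obj
  map : ∀ x y, C.Hom x y →ₗ[k] D.Hom (obj x) (obj y)
  map_id : ∀ x, map x x (C.id x) = D.id (obj x)
  map_comp : ∀ {x y z} (g : C.Hom y z) (f : C.Hom x y),
    map x z (C.comp g f) = D.comp (map y z g) (map x y f)

/-- The identity functor. -/
def kFunctor.idF (k : Type) [CommRing k] (C : kCat k) : kFunctor k C C where
  obj := fun x => x
  map := fun _ _ => LinearMap.id
  map_id := fun _ => rfl
  map_comp := fun _ _ => rfl

/-- Composition of `k`-linear functors. -/
def kFunctor.compF {k : Type} [CommRing k] {C D E : kCat k}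
    (F : kFunctor k D E) (H : kFunctor k C D) : kFunctor k C E where
  obj := fun x => F.obj (H.obj x)
  map := fun x y => (F.map _ _).comp (H.map x y)
  map_id := fun x => by simp [H.map_id, F.map_id]
  map_comp := fun g f => by simp [H.map_comp, F.map_comp]

/-- A natural transformation between `k`-linear functors. -/
structure kNatTrans {k : Type} [CommRing k] {C D : kCat k} (F G : kFunctor k C D) where
  app : ∀ x, D.Hom (F.obj x) (G.obj x)
  naturality : ∀ {x y} (f : C.Hom x y),
    D.comp (app y) (F.map x y f) = D.comp (G.map x y f) (app x)

/-- A natural isomorphism between `k`-linear functors, given by a pair of mutually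
inverse natural transformations. -/
structure kNatIso {k : Type} [CommRing k] {C D : kCat k} (F G : kFunctor k C D) where
  hom : kNatTrans F G
  inv : kNatTrans G F
  hom_inv : ∀ x, D.comp (inv.app x) (hom.app x) = D.id (F.obj x)
  inv_hom : ∀ x, D.comp (hom.app x) (inv.app x) = D.id (G.obj x)

/-- An equivalence of categories over `k`. -/
structure kEquivalence (k : Type) [CommRing k] (C D : kCat k) where
  F : kFunctor k C D
  G : kFunctor k D C
  unitIso : kNatIso (kFunctor.idF k C) (kFunctor.compF G F)
  counitIso : kNatIso (kFunctor.compF F G) (kFunctor.idF k D)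

/-- An isomorphism of categories over `k`: a `k`-linear functor which is bijective on
objects and bijective (hence a `k`-module isomorphism) on each morphism module. -/
structure kCatIso (k : Type) [CommRing k] (C D : kCat k) where
  F : kFunctor k C D
  objBij : Function.Bijective F.obj
  homBij : ∀ x y, Function.Bijective (F.map x y)

/-- The full subcategory on the objects satisfying a predicate `P`. -/
def kCat.fullSub {k : Type} [CommRing k] (C : kCat k) (P : C.Obj → Prop) : kCat k where
  Obj := { x : C.Obj // P x }
  Hom := fun x y => C.Hom x.1 y.1
  homAdd := fun _ _ => inferInstance
  homMod := fun _ _ => inferInstance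
  id := fun x => C.id x.1
  comp := fun g f => C.comp g f
  id_comp := fun f => C.id_comp f
  comp_id := fun f => C.comp_id f
  assoc := fun h g f => C.assoc h g f
  comp_add_left := fun g g' f => C.comp_add_left g g' f
  comp_add_right := fun g f f' => C.comp_add_right g f f'
  comp_smul_left := fun a g f => C.comp_smul_left a g f
  comp_smul_right := fun a g f => C.comp_smul_right a g f

/-- The inclusion functor of a full subcategory. -/
def kCat.inclFunctor {k : Type} [CommRing k] (C : kCat k) (P : C.Obj → Prop) :
    kFunctor k (C.fullSub P) C where
  obj := fun x => x.1
  map := fun _ _ => LinearMap.id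
  map_id := fun _ => rfl
  map_comp := fun _ _ => rfl

/-! Direct sum helpers. -/

open DirectSum

/-- The element of a direct sum concentrated in one component. -/
noncomputable def dsSingle {ι : Type} {M : ι → Type} [∀ i, AddCommGroup (M i)]
    (i : ι) (m : M i) : ⨁ i, M i :=
  letI := Classical.decEq ι
  DFinsupp.single i m

/-- The linear inclusion of one component into a direct sum. -/
noncomputable def dsLof (k : Type) [CommRing k] {ι : Type} (M : ι → Type)
    [∀ i, AddCommGroup (M i)] [∀ i, Module k (M i)] (i : ι) : M i →ₗ[k] ⨁ i, M i :=
  letI := Classical.decEq ι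
  DirectSum.lof k ι M i

/-- A family of submodules of `M` is *internal* (i.e. `M` is their internal direct sum)
when the canonical summation map from the direct sum of the submodules to `M`
is bijective. -/
def SubmodulesInternal (k : Type) [CommRing k] {ι : Type} {M : Type}
    [AddCommGroup M] [Module k M] (p : ι → Submodule k M) : Prop :=
  letI := Classical.decEq ι
  Function.Bijective
    (⇑(DFinsupp.sumAddHom (β := fun i => ↥(p i)) fun i => ((p i).subtype).toAddMonoidHom))

/-! `G`-categories over `k`, free actions, the quotient (orbit) category of a free
`G`-category, and the skew category. -/

/-- An action of a group `G` on a category `C` over `k`: an action on objects together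
with `k`-linear maps on morphism modules, compatible with composition, identities and
the group law. -/
structure GAction (k G : Type) [CommRing k] [Group G] (C : kCat k) where
  smulObj : G → C.Obj → C.Obj
  one_smulObj : ∀ x, smulObj 1 x = x
  mul_smulObj : ∀ s t x, smulObj (s * t) x = smulObj s (smulObj t x)
  smulHom : ∀ (s : G) (x y : C.Obj), C.Hom x y →ₗ[k] C.Hom (smulObj s x) (smulObj s y)
  smulHom_comp : ∀ (s : G) {x y z} (g : C.Hom y z) (f : C.Hom x y),
    smulHom s x z (C.comp g f) = C.comp (smulHom s y z g) (smulHom s x y f)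
  smulHom_id : ∀ (s : G) (x), smulHom s x x (C.id x) = C.id (smulObj s x)
  one_smulHom : ∀ {x y} (f : C.Hom x y), HEq (smulHom 1 x y f) f
  mul_smulHom : ∀ (s t : G) {x y} (f : C.Hom x y),
    HEq (smulHom (s * t) x y f) (smulHom s _ _ (smulHom t x y f))

namespace GAction

variable {k G : Type} [CommRing k] [Group G] {C : kCat k}

/-- The action is free when no nontrivial group element fixes an object. -/
def IsFree (A : GAction k G C) : Prop := ∀ (s : G) (x : C.Obj), A.smulObj s x = x → s = 1

/-- The orbit equivalence relation on objects. -/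
def orbitSetoid (A : GAction k G C) : Setoid C.Obj where
  r x y := ∃ s : G, A.smulObj s x = y
  iseqv := by
    refine ⟨fun x => ⟨1, A.one_smulObj x⟩, ?_, ?_⟩
    · rintro x y ⟨s, h⟩
      exact ⟨s⁻¹, by rw [← h, ← A.mul_smulObj, inv_mul_cancel, A.one_smulObj]⟩
    · rintro x y z ⟨s, h⟩ ⟨t, h'⟩
      exact ⟨t * s, by rw [A.mul_smulObj, h, h']⟩

/-- The set of `G`-orbits of objects. -/
def QuotObj (A : GAction k G C) : Type := Quotient A.orbitSetoid

/-- The orbit of an object. -/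
def orb (A : GAction k G C) (x : C.Obj) : A.QuotObj := Quotient.mk A.orbitSetoid x

theorem orb_smul (A : GAction k G C) (s : G) (x : C.Obj) :
    A.orb (A.smulObj s x) = A.orb x :=
  (Quotient.sound ⟨s, rfl⟩ : A.orb x = A.orb (A.smulObj s x)).symm

/-- The index type of pairs `(x, y)` with `x` in the orbit `α` and `y` in the orbit `β`. -/
def PairIdx (A : GAction k G C) (α β : A.QuotObj) : Type :=
  { x : C.Obj // A.orb x = α } × { y : C.Obj // A.orb y = β }

/-- The direct sum `⊕_{x ∈ α, y ∈ β} Hom_C(x, y)`. -/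
def HomSum (A : GAction k G C) (α β : A.QuotObj) : Type :=
  ⨁ p : A.PairIdx α β, C.Hom p.1.1 p.2.1

noncomputable instance (A : GAction k G C) (α β : A.QuotObj) :
    AddCommGroup (A.HomSum α β) :=
  inferInstanceAs (AddCommGroup (⨁ p : A.PairIdx α β, C.Hom p.1.1 p.2.1))

noncomputable instance (A : GAction k G C) (α β : A.QuotObj) :
    Module k (A.HomSum α β) :=
  inferInstanceAs (Module k (⨁ p : A.PairIdx α β, C.Hom p.1.1 p.2.1))

/-- The element of `HomSum` concentrated in the component indexed by `(x, y)`. -/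
noncomputable def homSumSingle (A : GAction k G C) {α β : A.QuotObj} {x y : C.Obj}
    (hx : A.orb x = α) (hy : A.orb y = β) (f : C.Hom x y) : A.HomSum α β :=
  dsSingle (M := fun p : A.PairIdx α β => C.Hom p.1.1 p.2.1) ⟨⟨x, hx⟩, ⟨y, hy⟩⟩ f

/-- The submodule of `HomSum` spanned by the elements `s • f - f`; quotienting by it
produces the largest quotient on which `G` acts trivially. -/
noncomputable def gSub (A : GAction k G C) (α β : A.QuotObj) :
    Submodule k (A.HomSum α β) :=
  Submodule.span k
    {z | ∃ (s : G) (x y : C.Obj) (hx : A.orb x = α) (hy : A.orb y = β) (f : C.Hom x y),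
      z = A.homSumSingle ((A.orb_smul s x).trans hx) ((A.orb_smul s y).trans hy)
            (A.smulHom s x y f)
          - A.homSumSingle hx hy f}

/-- The morphism module of the quotient category `C/G` from the orbit `α` to the
orbit `β`. -/
def QuotHom (A : GAction k G C) (α β : A.QuotObj) : Type :=
  A.HomSum α β ⧸ A.gSub α β

noncomputable instance (A : GAction k G C) (α β : A.QuotObj) :
    AddCommGroup (A.QuotHom α β) :=
  inferInstanceAs (AddCommGroup (A.HomSum α β ⧸ A.gSub α β))

noncomputable instance (A : GAction k G C) (α β : A.QuotObj) :
    Module k (A.QuotHom α β) :=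
  inferInstanceAs (Module k (A.HomSum α β ⧸ A.gSub α β))

/-- The `k`-linear map sending a morphism `f : x → y` of `C` to its class in the
morphism module of the quotient category. -/
noncomputable def projL (A : GAction k G C) {α β : A.QuotObj} {x y : C.Obj}
    (hx : A.orb x = α) (hy : A.orb y = β) : C.Hom x y →ₗ[k] A.QuotHom α β :=
  (A.gSub α β).mkQ.comp
    (letI := Classical.decEq (A.PairIdx α β)
     DirectSum.lof k (A.PairIdx α β) (fun p => C.Hom p.1.1 p.2.1) ⟨⟨x, hx⟩, ⟨y, hy⟩⟩)

/-- The class of a morphism `f : x → y` of `C` in the quotient category. -/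
noncomputable def proj (A : GAction k G C) {α β : A.QuotObj} {x y : C.Obj}
    (hx : A.orb x = α) (hy : A.orb y = β) (f : C.Hom x y) : A.QuotHom α β :=
  A.projL hx hy f

end GAction

/-- The structure of the quotient category `C/G` of a (free) `G`-category `C` over `k`:
its objects are the `G`-orbits of objects of `C`, its morphism modules are the modules
`QuotHom`, and its composition and identities are induced by those of `C` via the
projection, making it a category over `k`. -/
structure QuotStr {k G : Type} [CommRing k] [Group G] {C : kCat k} (A : GAction k G C) where
  comp : ∀ {α β γ : A.QuotObj}, A.QuotHom β γ → A.QuotHom α β → A.QuotHom α γ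
  id : ∀ α : A.QuotObj, A.QuotHom α α
  id_comp : ∀ {α β} (f : A.QuotHom α β), comp (id β) f = f
  comp_id : ∀ {α β} (f : A.QuotHom α β), comp f (id α) = f
  assoc : ∀ {α β γ δ} (h : A.QuotHom γ δ) (g : A.QuotHom β γ) (f : A.QuotHom α β),
    comp (comp h g) f = comp h (comp g f)
  comp_add_left : ∀ {α β γ} (g g' : A.QuotHom β γ) (f : A.QuotHom α β),
    comp (g + g') f = comp g f + comp g' f
  comp_add_right : ∀ {α β γ} (g : A.QuotHom β γ) (f f' : A.QuotHom α β),
    comp g (f + f') = comp g f + comp g f'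
  comp_smul_left : ∀ {α β γ} (a : k) (g : A.QuotHom β γ) (f : A.QuotHom α β),
    comp (a • g) f = a • comp g f
  comp_smul_right : ∀ {α β γ} (a : k) (g : A.QuotHom β γ) (f : A.QuotHom α β),
    comp g (a • f) = a • comp g f
  comp_proj : ∀ {α β γ} {x y z : C.Obj}
    (hx : A.orb x = α) (hy : A.orb y = β) (hz : A.orb z = γ)
    (g : C.Hom y z) (f : C.Hom x y),
    comp (A.proj hy hz g) (A.proj hx hy f) = A.proj hx hz (C.comp g f)
  id_proj : ∀ {α} {x : C.Obj} (hx : A.orb x = α), id α = A.proj hx hx (C.id x)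

/-- The quotient category `C/G` as a category over `k`. -/
noncomputable def QuotStr.toKCat {k G : Type} [CommRing k] [Group G] {C : kCat k}
    {A : GAction k G C} (Q : QuotStr A) : kCat k where
  Obj := A.QuotObj
  Hom := A.QuotHom
  homAdd := fun _ _ => inferInstance
  homMod := fun _ _ => inferInstance
  id := Q.id
  comp := Q.comp
  id_comp := Q.id_comp
  comp_id := Q.comp_id
  assoc := Q.assoc
  comp_add_left := Q.comp_add_left
  comp_add_right := Q.comp_add_right
  comp_smul_left := Q.comp_smul_left
  comp_smul_right := Q.comp_smul_right

/-! Gradings of a category over `k` by a group, and the smash product category. -/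

/-- A `G`-grading of a category `B` over `k`: each morphism module decomposes as a
direct sum `Hom(x,y) = ⊕_{s ∈ G} Hom^s(x,y)` with `Hom^t ∘ Hom^s ⊆ Hom^{ts}`
and identities in degree `1`. -/
structure Grading (k G : Type) [CommRing k] [Group G] (B : kCat k) where
  deg : G → ∀ x y : B.Obj, Submodule k (B.Hom x y)
  internal : ∀ x y : B.Obj, SubmodulesInternal k (fun s => deg s x y)
  comp_mem : ∀ {x y z : B.Obj} {s t : G} {g : B.Hom y z} {f : B.Hom x y},
    g ∈ deg t y z → f ∈ deg s x y → B.comp g f ∈ deg (t * s) x z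
  id_mem : ∀ x : B.Obj, B.id x ∈ deg 1 x x

/-- A small helper: elements of equal submodules with equal values are heterogeneously
equal. -/
theorem Submodule.heq_mk {k M : Type} [CommRing k] [AddCommGroup M] [Module k M]
    {p q : Submodule k M} (h : p = q) (v : M) (hp : v ∈ p) (hq : v ∈ q) :
    HEq (⟨v, hp⟩ : p) (⟨v, hq⟩ : q) := by subst h; rfl

/-- The smash product category `B#G` of a `G`-graded category `B` over `k`:
objects are pairs `(x, s)` with `x` an object of `B` and `s ∈ G`, and
`Hom((x,s),(y,t)) = Hom_B^{t⁻¹s}(x, y)`, with composition induced by the graded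
composition of `B`. -/
def smashCat {k G : Type} [CommRing k] [Group G] (B : kCat k) (gr : Grading k G B) :
    kCat k where
  Obj := B.Obj × G
  Hom := fun p q => ↥(gr.deg (q.2⁻¹ * p.2) p.1 q.1)
  homAdd := fun _ _ => inferInstance
  homMod := fun _ _ => inferInstance
  id := fun p => ⟨B.id p.1, by rw [inv_mul_cancel]; exact gr.id_mem p.1⟩
  comp := fun {p q r} g f => ⟨B.comp g.1 f.1, by
    have h : (r.2⁻¹ * q.2) * (q.2⁻¹ * p.2) = r.2⁻¹ * p.2 := by group
    rw [← h]; exact gr.comp_mem g.2 f.2⟩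
  id_comp := fun f => Subtype.ext (B.id_comp f.1)
  comp_id := fun f => Subtype.ext (B.comp_id f.1)
  assoc := fun h g f => Subtype.ext (B.assoc h.1 g.1 f.1)
  comp_add_left := fun g g' f => Subtype.ext
    (by simpa using B.comp_add_left g.1 g'.1 f.1)
  comp_add_right := fun g f f' => Subtype.ext
    (by simpa using B.comp_add_right g.1 f.1 f'.1)
  comp_smul_left := fun a g f => Subtype.ext
    (by simpa using B.comp_smul_left a g.1 f.1)
  comp_smul_right := fun a g f => Subtype.ext
    (by simpa using B.comp_smul_right a g.1 f.1)

/-- The canonical (free) action of `G` on the smash product category `B#G`: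
`u · (x, s) = (x, us)` on objects, identity on the morphism components. -/
def smashAction {k G : Type} [CommRing k] [Group G] (B : kCat k) (gr : Grading k G B) :
    GAction k G (smashCat B gr) where
  smulObj := fun u p => show (smashCat B gr).Obj from (p.1, u * p.2)
  one_smulObj := fun p => by cases p; simp; rfl
  mul_smulObj := fun s t p => by cases p; simp [mul_assoc]; rfl
  smulHom := fun u p q =>
    { toFun := fun f => ⟨f.1, by
        have h : ((u * q.2)⁻¹ * (u * p.2)) = q.2⁻¹ * p.2 := by group
        rw [h]; exact f.2⟩
      map_add' := fun f g => rfl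
      map_smul' := fun a f => rfl }
  smulHom_comp := fun s {p q r} g f => Subtype.ext rfl
  smulHom_id := fun s p => Subtype.ext rfl
  one_smulHom := fun {p q} f => by
    have h : gr.deg (((1 : G) * q.2)⁻¹ * ((1 : G) * p.2)) p.1 q.1
        = gr.deg (q.2⁻¹ * p.2) p.1 q.1 := by rw [one_mul, one_mul]
    exact Submodule.heq_mk h f.1 (h.symm ▸ f.2) f.2
  mul_smulHom := fun s t {p q} f => by
    have e1 : s * t * q.2 = s * (t * q.2) := mul_assoc s t q.2
    have e2 : s * t * p.2 = s * (t * p.2) := mul_assoc s t p.2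
    have h : gr.deg ((s * t * q.2)⁻¹ * (s * t * p.2)) p.1 q.1
        = gr.deg ((s * (t * q.2))⁻¹ * (s * (t * p.2))) p.1 q.1 := by rw [e1, e2]
    have hmem : f.1 ∈ gr.deg ((s * (t * q.2))⁻¹ * (s * (t * p.2))) p.1 q.1 := by
      have h2 : ((s * (t * q.2))⁻¹ * (s * (t * p.2))) = q.2⁻¹ * p.2 := by group
      rw [h2]; exact f.2
    exact Submodule.heq_mk h f.1 (h ▸ hmem) hmem

/-- The Galois covering (projection) functor `B#G → B`, `(x,s) ↦ x` on objects and the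
inclusion of the degree component on morphisms. -/
def smashProjFunctor {k G : Type} [CommRing k] [Group G] (B : kCat k)
    (gr : Grading k G B) : kFunctor k (smashCat B gr) B where
  obj := fun p => p.1
  map := fun p q => (gr.deg (q.2⁻¹ * p.2) p.1 q.1).subtype
  map_id := fun _ => rfl
  map_comp := fun _ _ => rfl

section Aux

open DirectSum

variable {k G : Type} [CommRing k] [Group G]

/-- Cast of morphisms as a linear map. -/
noncomputable def kCat.transL (C : kCat k) {x x' y y' : C.Obj}
    (hx : x = x') (hy : y = y') : C.Hom x y →ₗ[k] C.Hom x' y' where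
  toFun := C.trans2 hx hy
  map_add' := by subst hx; subst hy; intro a b; rfl
  map_smul' := by subst hx; subst hy; intro a b; rfl

theorem Submodule.heq_of_val {M : Type} [AddCommGroup M] [Module k M]
    {p q : Submodule k M} (h : p = q) {a : p} {b : q} (hv : (a : M) = (b : M)) :
    HEq a b := by subst h; exact heq_of_eq (Subtype.ext hv)

namespace GAction

variable {C : kCat k} (A : GAction k G C)

theorem proj_eq_mk {α β : A.QuotObj} {x y : C.Obj}
    (hx : A.orb x = α) (hy : A.orb y = β) (f : C.Hom x y) :
    A.proj hx hy f = Submodule.Quotient.mk (A.homSumSingle hx hy f) := rfl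

theorem proj_congr {α β : A.QuotObj} {x x' y y' : C.Obj}
    (ex : x = x') (ey : y = y')
    {hx : A.orb x = α} {hx' : A.orb x' = α} {hy : A.orb y = β} {hy' : A.orb y' = β}
    {f : C.Hom x y} {f' : C.Hom x' y'} (hf : HEq f f') :
    A.proj hx hy f = A.proj hx' hy' f' := by
  subst ex; subst ey; cases hf; rfl

theorem proj_smul {α β : A.QuotObj} (u : G) {x y : C.Obj}
    {hx : A.orb x = α} {hy : A.orb y = β}
    {hx' : A.orb (A.smulObj u x) = α} {hy' : A.orb (A.smulObj u y) = β}
    (f : C.Hom x y) :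
    A.proj hx' hy' (A.smulHom u x y f) = A.proj hx hy f := by
  rw [proj_eq_mk, proj_eq_mk]
  exact (Submodule.Quotient.eq _).mpr (Submodule.subset_span ⟨u, x, y, hx, hy, f, rfl⟩)

theorem quotHom_ind {α β : A.QuotObj} {P : A.QuotHom α β → Prop}
    (h0 : P 0) (hadd : ∀ a b, P a → P b → P (a + b))
    (hp : ∀ (x y : C.Obj) (hx : A.orb x = α) (hy : A.orb y = β) (f : C.Hom x y),
      P (A.proj hx hy f)) :
    ∀ q, P q := by
  letI := Classical.decEq (A.PairIdx α β)
  intro q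
  obtain ⟨m, rfl⟩ := Submodule.Quotient.mk_surjective _ q
  refine DirectSum.induction_on
    (motive := fun m : A.HomSum α β => P (Submodule.Quotient.mk m)) m ?_ ?_ ?_
  · exact h0
  · rintro ⟨⟨x, hx⟩, ⟨y, hy⟩⟩ f
    exact hp x y hx hy f
  · intro a b ha hb
    exact hadd _ _ ha hb

end GAction

end Aux

section Main

open DirectSum

variable {k G : Type} [CommRing k] [Group G] (B : kCat k) (gr : Grading k G B)

attribute [local instance] Classical.decEq

theorem smashOrb_fst {p q : (smashCat B gr).Obj}
    (h : (smashAction B gr).orbitSetoid.r p q) : p.1 = q.1 := by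
  obtain ⟨u, rfl⟩ := h; rfl

/-- Object part of the functor `(B#G)/G → B`. -/
def Fobj : (smashAction B gr).QuotObj → B.Obj :=
  Quotient.lift (fun p => p.1) (fun _ _ h => smashOrb_fst B gr h)

theorem orb_pair (x : B.Obj) (s t : G) :
    (smashAction B gr).orb (x, s) = (smashAction B gr).orb (x, t) :=
  (Quotient.sound ⟨s * t⁻¹, by
    show (x, s * t⁻¹ * t) = (x, s)
    rw [inv_mul_cancel_right]⟩ :
      (smashAction B gr).orb (x, t) = (smashAction B gr).orb (x, s)).symm

theorem orb_repr (α : (smashAction B gr).QuotObj) :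
    (smashAction B gr).orb (Fobj B gr α, 1) = α := by
  induction α using Quotient.ind with
  | _ p => exact orb_pair B gr p.1 1 p.2

/-- The family of component maps of the forward map. -/
noncomputable def fwdComp (α β : (smashAction B gr).QuotObj)
    (pr : (smashAction B gr).PairIdx α β) :
    (smashCat B gr).Hom pr.1.1 pr.2.1 →ₗ[k] B.Hom (Fobj B gr α) (Fobj B gr β) :=
  (B.transL (congrArg (Fobj B gr) pr.1.2) (congrArg (Fobj B gr) pr.2.2)).comp
    ((smashProjFunctor B gr).map pr.1.1 pr.2.1)

/-- The forward map on the direct sum. -/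
noncomputable def fwdSum (α β : (smashAction B gr).QuotObj) :
    (smashAction B gr).HomSum α β →ₗ[k] B.Hom (Fobj B gr α) (Fobj B gr β) :=
  DirectSum.toModule k ((smashAction B gr).PairIdx α β) _ (fwdComp B gr α β)

theorem fwdSum_single {α β : (smashAction B gr).QuotObj} {x y : (smashCat B gr).Obj}
    (hx : (smashAction B gr).orb x = α) (hy : (smashAction B gr).orb y = β)
    (f : (smashCat B gr).Hom x y) :
    fwdSum B gr α β ((smashAction B gr).homSumSingle hx hy f)
      = B.transL (congrArg (Fobj B gr) hx) (congrArg (Fobj B gr) hy) f.1 := by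
  letI := Classical.decEq ((smashAction B gr).PairIdx α β)
  exact DirectSum.toModule_lof (R := k) (ι := (smashAction B gr).PairIdx α β)
    (M := fun pr => (smashCat B gr).Hom pr.1.1 pr.2.1)
    (φ := fwdComp B gr α β) (⟨⟨x, hx⟩, ⟨y, hy⟩⟩ : (smashAction B gr).PairIdx α β) f

theorem fwdSum_ker {α β : (smashAction B gr).QuotObj} :
    (smashAction B gr).gSub α β ≤ LinearMap.ker (fwdSum B gr α β) := by
  rw [GAction.gSub, Submodule.span_le]
  rintro z ⟨u, x, y, hx, hy, f, rfl⟩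
  refine LinearMap.mem_ker.mpr ?_
  rw [map_sub, fwdSum_single, fwdSum_single, sub_eq_zero]
  rfl

/-- The morphism part of the functor `(B#G)/G → B`. -/
noncomputable def Fmap (α β : (smashAction B gr).QuotObj) :
    (smashAction B gr).QuotHom α β →ₗ[k] B.Hom (Fobj B gr α) (Fobj B gr β) :=
  ((smashAction B gr).gSub α β).liftQ (fwdSum B gr α β) (fwdSum_ker B gr)

theorem Fmap_proj {α β : (smashAction B gr).QuotObj} {x y : (smashCat B gr).Obj}
    (hx : (smashAction B gr).orb x = α) (hy : (smashAction B gr).orb y = β)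
    (f : (smashCat B gr).Hom x y) :
    Fmap B gr α β ((smashAction B gr).proj hx hy f)
      = B.transL (congrArg (Fobj B gr) hx) (congrArg (Fobj B gr) hy) f.1 := by
  rw [GAction.proj_eq_mk]
  exact (Submodule.liftQ_apply _ (fwdSum B gr α β) _).trans (fwdSum_single B gr hx hy f)

/-- The decomposition of a hom module of `B` into degree components. -/
noncomputable def decompE (x y : B.Obj) :
    (⨁ u : G, ↥(gr.deg u x y)) ≃ₗ[k] B.Hom x y :=
  letI := Classical.decEq G
  LinearEquiv.ofBijective (DirectSum.coeLinearMap fun u => gr.deg u x y)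
    (gr.internal x y)

/-- The component maps of `sumProj`. -/
noncomputable def sumProjComp (α β : (smashAction B gr).QuotObj) (u : G) :
    ↥(gr.deg u (Fobj B gr α) (Fobj B gr β)) →ₗ[k] (smashAction B gr).QuotHom α β :=
  ((smashAction B gr).projL (x := show (smashCat B gr).Obj from (Fobj B gr α, u))
      (y := show (smashCat B gr).Obj from (Fobj B gr β, 1)) ((orb_pair B gr _ u 1).trans (orb_repr B gr α))
      (orb_repr B gr β)).comp
    (Submodule.inclusion (le_of_eq (by rw [inv_one, one_mul])))

/-- Sum of projections, landing in the quotient category hom. -/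
noncomputable def sumProj (α β : (smashAction B gr).QuotObj) :
    (⨁ u : G, ↥(gr.deg u (Fobj B gr α) (Fobj B gr β))) →ₗ[k]
      (smashAction B gr).QuotHom α β :=
  DirectSum.toModule k G _ (sumProjComp B gr α β)

theorem sumProj_lof (α β : (smashAction B gr).QuotObj) (u : G)
    (m : ↥(gr.deg u (Fobj B gr α) (Fobj B gr β))) :
    letI := Classical.decEq G
    sumProj B gr α β
        (DirectSum.lof k G (fun u => ↥(gr.deg u (Fobj B gr α) (Fobj B gr β))) u m)
      = sumProjComp B gr α β u m := by
  letI := Classical.decEq G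
  exact DirectSum.toModule_lof (R := k) (ι := G)
    (M := fun u => ↥(gr.deg u (Fobj B gr α) (Fobj B gr β)))
    (φ := sumProjComp B gr α β) u m

/-- The inverse of `Fmap`. -/
noncomputable def bwd (α β : (smashAction B gr).QuotObj) :
    B.Hom (Fobj B gr α) (Fobj B gr β) →ₗ[k] (smashAction B gr).QuotHom α β :=
  (sumProj B gr α β).comp (decompE B gr (Fobj B gr α) (Fobj B gr β)).symm.toLinearMap

theorem decompE_lof (x y : B.Obj) (u : G) (m : ↥(gr.deg u x y)) :
    letI := Classical.decEq G
    decompE B gr x y (DirectSum.lof k G (fun u => ↥(gr.deg u x y)) u m) = m := by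
  letI := Classical.decEq G
  show DirectSum.coeLinearMap (fun u => gr.deg u x y) _ = _
  rw [DirectSum.lof_eq_of, DirectSum.coeLinearMap_of]

theorem Fmap_rightInv (α β : (smashAction B gr).QuotObj)
    (g : B.Hom (Fobj B gr α) (Fobj B gr β)) :
    Fmap B gr α β (bwd B gr α β g) = g := by
  letI := Classical.decEq G
  have key : (Fmap B gr α β).comp (sumProj B gr α β)
      = DirectSum.coeLinearMap fun u => gr.deg u (Fobj B gr α) (Fobj B gr β) := by
    refine DirectSum.linearMap_ext k fun u => LinearMap.ext fun m => ?_
    simp only [LinearMap.comp_apply]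
    rw [sumProj_lof, DirectSum.lof_eq_of, DirectSum.coeLinearMap_of]
    exact (Fmap_proj B gr (x := (Fobj B gr α, u)) (y := (Fobj B gr β, 1)) _ _ _).trans rfl
  have h := congrArg (fun F => F ((decompE B gr (Fobj B gr α) (Fobj B gr β)).symm g))
    key
  simp only [LinearMap.comp_apply] at h
  rw [bwd, LinearMap.comp_apply, LinearEquiv.coe_toLinearMap, h]
  exact (decompE B gr (Fobj B gr α) (Fobj B gr β)).apply_symm_apply g

theorem Fmap_leftInv (α β : (smashAction B gr).QuotObj)
    (q : (smashAction B gr).QuotHom α β) :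
    bwd B gr α β (Fmap B gr α β q) = q := by
  letI := Classical.decEq G
  refine GAction.quotHom_ind _
    (P := fun r => bwd B gr α β (Fmap B gr α β r) = r) ?_ ?_ ?_ q
  · simp
  · intro a b ha hb; rw [map_add, map_add, ha, hb]
  · rintro ⟨x, s⟩ ⟨y, t⟩ hx hy f
    subst hx; subst hy
    erw [Fmap_proj]
    have hval : (B.transL
        (congrArg (Fobj B gr) (rfl : (smashAction B gr).orb (x, s) = _))
        (congrArg (Fobj B gr) (rfl : (smashAction B gr).orb (y, t) = _)) f.1)
        = (f.1 : B.Hom x y) := rfl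
    rw [hval]
    have hdec : (decompE B gr x y).symm f.1
        = DirectSum.lof k G (fun u => ↥(gr.deg u x y)) (t⁻¹ * s) f := by
      rw [LinearEquiv.symm_apply_eq]
      exact (decompE_lof B gr x y (t⁻¹ * s) f).symm
    show sumProj B gr ((smashAction B gr).orb (x, s)) ((smashAction B gr).orb (y, t))
        ((decompE B gr x y).symm (f.1 : B.Hom x y)) = _
    rw [hdec]
    refine (sumProj_lof B gr ((smashAction B gr).orb (x, s)) ((smashAction B gr).orb (y, t))
      (t⁻¹ * s) f).trans ?_
    show (smashAction B gr).proj _ _ _ = _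
    have hgrp : ((t : G) * 1)⁻¹ * (t * (t⁻¹ * s)) = t⁻¹ * s := by group
    refine ((GAction.proj_smul (smashAction B gr) t
      (hx := orb_pair B gr x (t⁻¹ * s) s)
      (hy := orb_pair B gr y 1 t)
      (hx' := orb_pair B gr x (t * (t⁻¹ * s)) s)
      (hy' := orb_pair B gr y (t * 1) t) _).symm).trans ?_
    exact GAction.proj_congr (smashAction B gr)
      (hx' := rfl) (hy' := rfl)
      (show (smashAction B gr).smulObj t (x, t⁻¹ * s) = ((x, s) : B.Obj × G) by
        show (x, t * (t⁻¹ * s)) = (x, s); rw [mul_inv_cancel_left])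
      (show (smashAction B gr).smulObj t (y, 1) = ((y, t) : B.Obj × G) by
        show ((y, t * 1) : B.Obj × G) = (y, t); rw [mul_one])
      (Submodule.heq_of_val (by
        show gr.deg ((t * 1)⁻¹ * (t * (t⁻¹ * s))) x y = gr.deg (t⁻¹ * s) x y
        rw [hgrp]) rfl)

theorem Fmap_id (Q : QuotStr (smashAction B gr)) (α : (smashAction B gr).QuotObj) :
    Fmap B gr α α (Q.id α) = B.id (Fobj B gr α) := by
  induction α using Quotient.ind with
  | _ p =>
    show Fmap B gr ((smashAction B gr).orb p) ((smashAction B gr).orb p)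
        (Q.id ((smashAction B gr).orb p)) = B.id (Fobj B gr ((smashAction B gr).orb p))
    rw [Q.id_proj (x := p) rfl, Fmap_proj]
    rfl

theorem Fmap_comp (Q : QuotStr (smashAction B gr))
    {α β γ : (smashAction B gr).QuotObj}
    (g : (smashAction B gr).QuotHom β γ) (f : (smashAction B gr).QuotHom α β) :
    Fmap B gr α γ (Q.comp g f)
      = B.comp (Fmap B gr β γ g) (Fmap B gr α β f) := by
  have qz1 : ∀ {α β γ : (smashAction B gr).QuotObj} (g : (smashAction B gr).QuotHom β γ),
      Q.comp g (0 : (smashAction B gr).QuotHom α β) = 0 := fun g => by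
    simpa using Q.comp_smul_right (0 : k) g 0
  have qz2 : ∀ {α β γ : (smashAction B gr).QuotObj} (f : (smashAction B gr).QuotHom α β),
      Q.comp (0 : (smashAction B gr).QuotHom β γ) f = 0 := fun {α β γ} f => by
    simpa using Q.comp_smul_left (0 : k) (0 : (smashAction B gr).QuotHom β γ) f
  have bz1 : ∀ {x y z : B.Obj} (g : B.Hom y z), B.comp g (0 : B.Hom x y) = 0 := fun g => by
    simpa using B.comp_smul_right (0 : k) g 0
  have bz2 : ∀ {x y z : B.Obj} (f : B.Hom x y), B.comp (0 : B.Hom y z) f = 0 := fun {x y z} f => by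
    simpa using B.comp_smul_left (0 : k) (0 : B.Hom y z) f
  revert g
  refine GAction.quotHom_ind _
    (P := fun f => ∀ g : (smashAction B gr).QuotHom β γ,
      Fmap B gr α γ (Q.comp g f) = B.comp (Fmap B gr β γ g) (Fmap B gr α β f)) ?_ ?_ ?_ f
  · intro g
    beta_reduce
    rw [qz1, map_zero, map_zero, bz1]
  · intro a b ha hb g
    beta_reduce
    rw [Q.comp_add_right, map_add, map_add, ha g, hb g, B.comp_add_right]
  · intro p qq hx hy f₀
    beta_reduce
    induction hx
    induction hy
    refine GAction.quotHom_ind _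
      (P := fun g => Fmap B gr _ γ (Q.comp g ((smashAction B gr).proj rfl rfl f₀))
        = B.comp (Fmap B gr _ γ g)
            (Fmap B gr _ _ ((smashAction B gr).proj rfl rfl f₀))) ?_ ?_ ?_
    · beta_reduce
      rw [qz2, map_zero, map_zero, bz2]
    · intro a b ha hb
      beta_reduce
      rw [Q.comp_add_left, map_add, map_add, ha, hb, B.comp_add_left]
    · intro q' r hy' hz g₀
      beta_reduce
      induction hz
      obtain ⟨u, hu⟩ := Quotient.exact hy'.symm
      subst hu
      -- now `g₀ : Hom (u • qq) r`
      have hgrp : ((u⁻¹ * r.2)⁻¹ * (u⁻¹ * (u * qq.2))) = ((u⁻¹ * r.2)⁻¹ * qq.2) := by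
        group
      have ex : (smashAction B gr).smulObj u⁻¹ ((smashAction B gr).smulObj u qq) = qq := by
        rw [← (smashAction B gr).mul_smulObj, inv_mul_cancel, (smashAction B gr).one_smulObj]
      let g1 : (smashCat B gr).Hom
          ((smashAction B gr).smulObj u⁻¹ ((smashAction B gr).smulObj u qq))
          ((smashAction B gr).smulObj u⁻¹ r) :=
        (smashAction B gr).smulHom u⁻¹ ((smashAction B gr).smulObj u qq) r g₀
      have hsub : gr.deg ((u⁻¹ * r.2)⁻¹ * (u⁻¹ * (u * qq.2))) qq.1 r.1
          = gr.deg ((u⁻¹ * r.2)⁻¹ * qq.2) qq.1 r.1 := by rw [hgrp]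
      let g2 : (smashCat B gr).Hom qq ((smashAction B gr).smulObj u⁻¹ r) :=
        Submodule.inclusion (le_of_eq hsub) g1
      have step : (smashAction B gr).proj hy'
            (rfl : (smashAction B gr).orb r = (smashAction B gr).orb r) g₀
          = (smashAction B gr).proj
              (rfl : (smashAction B gr).orb qq = (smashAction B gr).orb qq)
              ((smashAction B gr).orb_smul u⁻¹ r) g2 := by
        refine ((GAction.proj_smul (smashAction B gr) u⁻¹
          (hx := hy') (hy := rfl)
          (hx' := ((smashAction B gr).orb_smul u⁻¹ _).trans hy')
          (hy' := (smashAction B gr).orb_smul u⁻¹ r) g₀).symm).trans ?_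
        exact GAction.proj_congr (smashAction B gr) ex rfl
          (Submodule.heq_of_val hsub rfl)
      rw [step, Q.comp_proj, Fmap_proj, Fmap_proj, Fmap_proj]
      rfl

end Main

/-- **Proposition (Cibils–Marcos).** Let `B` be a `G`-graded category over `k`. The
smash product category `B#G` is a free `G`-category — `u ∈ G` acting by
`u·(x,s) = (x,us)` on objects and identically on morphism components — and the
quotient category `(B#G)/G` is canonically isomorphic to `B` (via `(x,s) ↦ x` on
orbits and `[f] ↦ f` on morphisms). -/
theorem smash_free_and_quot_iso (k G : Type) [CommRing k] [Group G]
    (B : kCat k) (gr : Grading k G B) (Q : QuotStr (smashAction B gr)) :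
    (smashAction B gr).IsFree ∧
    ∃ I : kCatIso k Q.toKCat B,
      (∀ (x : B.Obj) (s : G), I.F.obj ((smashAction B gr).orb (x, s)) = x) ∧
      (∀ (x y : B.Obj) (s t : G) (f : (smashCat B gr).Hom (x, s) (y, t))
        (h1 : I.F.obj ((smashAction B gr).orb (x, s)) = x)
        (h2 : I.F.obj ((smashAction B gr).orb (y, t)) = y),
        B.trans2 h1 h2
          (I.F.map ((smashAction B gr).orb (x, s)) ((smashAction B gr).orb (y, t))
            ((smashAction B gr).proj rfl rfl f)) = f.1) := by
  constructor
  · intro s p h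
    have h2 : s * p.2 = 1 * p.2 := by
      rw [one_mul]; exact congrArg Prod.snd h
    exact mul_right_cancel h2
  · refine ⟨⟨⟨Fobj B gr, Fmap B gr, Fmap_id B gr Q,
      fun {α β γ} g f => Fmap_comp B gr Q g f⟩, ?_, ?_⟩, fun x s => rfl, ?_⟩
    · constructor
      · intro a b hab
        have hab' : Fobj B gr a = Fobj B gr b := hab
        rw [← orb_repr B gr a, ← orb_repr B gr b]
        show (smashAction B gr).orb (Fobj B gr a, 1) = (smashAction B gr).orb (Fobj B gr b, 1)
        rw [hab']
      · intro x
        exact ⟨(smashAction B gr).orb (x, 1), rfl⟩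
    · intro α β
      exact Function.bijective_iff_has_inverse.mpr
        ⟨bwd B gr α β, Fmap_leftInv B gr α β, Fmap_rightInv B gr α β⟩
    · intro x y s t f h1 h2
      show B.trans2 h1 h2 (Fmap B gr _ _ ((smashAction B gr).proj rfl rfl f)) = f.1
      erw [Fmap_proj]
      rfl
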